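/- arXiv:2505.16593 — 3 statements merged into one kernel-verified Lean document; each statement's English description precedes it below -/
import Mathlib

section
/- There exist constants c, C > 0, depending only on d₁ and d₂, such that for every x ∈ ℝ^{d₁} × ℝ^{d₂} and every r > 0, c · r^{d₁+d₂} · max{r, |x'|}^{d₂} ≤ |B^ϱ(x, r)| ≤ C · r^{d₁+d₂} · max{r, |x'|}^{d₂}. -/
open MeasureTheory

/-- The Grushin quasi-distance on `ℝ^{d₁} × ℝ^{d₂}`. -/
noncomputable def grushinDist {d₁ d₂ : ℕ}
    (x y : EuclideanSpace ℝ (Fin d₁) × EuclideanSpace ℝ (Fin d₂)) : ℝ :=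
  if Real.sqrt ‖x.2 - y.2‖ ≤ ‖x.1‖ + ‖y.1‖ then
    ‖x.1 - y.1‖ + ‖x.2 - y.2‖ / (‖x.1‖ + ‖y.1‖)
  else
    ‖x.1 - y.1‖ + Real.sqrt ‖x.2 - y.2‖

/-- The closed Grushin ball `B^ϱ(x, r) = {y : ϱ(x, y) ≤ r}`. -/
def grushinBall {d₁ d₂ : ℕ}
    (x : EuclideanSpace ℝ (Fin d₁) × EuclideanSpace ℝ (Fin d₂)) (r : ℝ) :
    Set (EuclideanSpace ℝ (Fin d₁) × EuclideanSpace ℝ (Fin d₂)) :=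
  {y | grushinDist x y ≤ r}

/-!
The Grushin ball is squeezed between two products of Euclidean balls,
`B(x', r/2) × B(x'', r·max(r, |x'|)/4) ⊆ B^ϱ(x, r) ⊆ B(x', r) × B(x'', 3r·max(r, |x'|))`,
whose volumes are both comparable to `r^{d₁} (r·max(r, |x'|))^{d₂}`.
For the inner inclusion, bound `ϱ` by `|x' - y'| + |x'' - y''|^{1/2}` when `|x'| ≤ r` and by
`|x' - y'| + |x'' - y''|/(|x'| + |y'|)` when `|x'| > r`; the outer one follows from
`|x'' - y''| ≤ ϱ · max(ϱ, |x'| + |y'|)`.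
-/

open Metric Module

section ProductOfBalls

variable {E F : Type*} [NormedAddCommGroup E] [NormedSpace ℝ E] [FiniteDimensional ℝ E]
  [MeasureSpace E] [BorelSpace E] [(volume : Measure E).IsAddHaarMeasure]
  [NormedAddCommGroup F] [NormedSpace ℝ F] [FiniteDimensional ℝ F]
  [MeasureSpace F] [BorelSpace F] [(volume : Measure F).IsAddHaarMeasure]

theorem volume_closedBall_prod_closedBall (a : E) (b : F) {ρ σ : ℝ} (hρ : 0 ≤ ρ) (hσ : 0 ≤ σ) :
    volume (closedBall a ρ ×ˢ closedBall b σ) =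
      ENNReal.ofReal (ρ ^ finrank ℝ E * volume.real (ball (0 : E) 1) *
        (σ ^ finrank ℝ F * volume.real (ball (0 : F) 1))) := by
  have hfin : volume (closedBall a ρ ×ˢ closedBall b σ) ≠ ⊤ :=
    ((isCompact_closedBall a ρ).prod (isCompact_closedBall b σ)).measure_lt_top.ne
  rw [← ofReal_measureReal hfin, Measure.volume_eq_prod, measureReal_prod_prod,
    Measure.addHaar_real_closedBall _ _ hρ, Measure.addHaar_real_closedBall _ _ hσ]

end ProductOfBalls

theorem volume_real_unitBall_pos {E : Type*} [NormedAddCommGroup E] [NormedSpace ℝ E]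
    [FiniteDimensional ℝ E] [MeasureSpace E] [(volume : Measure E).IsAddHaarMeasure] :
    0 < volume.real (ball (0 : E) 1) :=
  ENNReal.toReal_pos (measure_ball_pos volume 0 one_pos).ne' measure_ball_lt_top.ne

theorem div_le_sqrt_of_sqrt_le {t s : ℝ} (ht : 0 ≤ t) (h : √t ≤ s) : t / s ≤ √t := by
  rcases (Real.sqrt_nonneg t).eq_or_lt with h0 | h0
  · simp [(Real.sqrt_eq_zero'.mp h0.symm).antisymm ht]
  · exact (div_le_div_of_nonneg_left ht h0 h).trans_eq Real.div_sqrt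

section Grushin

variable {d₁ d₂ : ℕ} (x y : EuclideanSpace ℝ (Fin d₁) × EuclideanSpace ℝ (Fin d₂))

theorem grushinDist_le_add_sqrt :
    grushinDist x y ≤ ‖x.1 - y.1‖ + √‖x.2 - y.2‖ := by
  unfold grushinDist
  split_ifs with h
  · gcongr
    exact div_le_sqrt_of_sqrt_le (norm_nonneg _) h
  · rfl

theorem grushinDist_le_add_div (h : 0 < ‖x.1‖ + ‖y.1‖) :
    grushinDist x y ≤ ‖x.1 - y.1‖ + ‖x.2 - y.2‖ / (‖x.1‖ + ‖y.1‖) := by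
  unfold grushinDist
  split_ifs with hs
  · rfl
  · gcongr
    rw [le_div_iff₀ h]
    calc √‖x.2 - y.2‖ * (‖x.1‖ + ‖y.1‖) ≤ √‖x.2 - y.2‖ * √‖x.2 - y.2‖ := by
          gcongr
          exact (not_le.mp hs).le
      _ = ‖x.2 - y.2‖ := Real.mul_self_sqrt (norm_nonneg _)

theorem norm_fst_sub_le_grushinDist : ‖x.1 - y.1‖ ≤ grushinDist x y := by
  unfold grushinDist
  split_ifs <;> simp only [le_add_iff_nonneg_right] <;> positivity

theorem norm_snd_sub_le_grushinDist_mul :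
    ‖x.2 - y.2‖ ≤ grushinDist x y * max (grushinDist x y) (‖x.1‖ + ‖y.1‖) := by
  have hg : 0 ≤ grushinDist x y := (norm_nonneg _).trans (norm_fst_sub_le_grushinDist x y)
  have ht : 0 ≤ ‖x.2 - y.2‖ := norm_nonneg _
  unfold grushinDist at hg ⊢
  split_ifs at hg ⊢ with h
  · rcases (by positivity : (0 : ℝ) ≤ ‖x.1‖ + ‖y.1‖).eq_or_lt with hs | hs
    · calc ‖x.2 - y.2‖ ≤ 0 := Real.sqrt_eq_zero'.mp ((hs ▸ h).antisymm (Real.sqrt_nonneg _))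
        _ ≤ _ := mul_nonneg hg (hg.trans (le_max_left _ _))
    · calc ‖x.2 - y.2‖ = ‖x.2 - y.2‖ / (‖x.1‖ + ‖y.1‖) * (‖x.1‖ + ‖y.1‖) := by field_simp
        _ ≤ _ := mul_le_mul (le_add_of_nonneg_left (norm_nonneg _)) (le_max_right _ _)
            hs.le hg
  · have hsqrt : √‖x.2 - y.2‖ ≤ ‖x.1 - y.1‖ + √‖x.2 - y.2‖ :=
      le_add_of_nonneg_left (norm_nonneg _)
    calc ‖x.2 - y.2‖ = √‖x.2 - y.2‖ * √‖x.2 - y.2‖ := (Real.mul_self_sqrt ht).symm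
      _ ≤ _ := mul_le_mul hsqrt (hsqrt.trans (le_max_left _ _)) (Real.sqrt_nonneg _) hg

theorem closedBall_prod_subset_grushinBall {r : ℝ} (hr : 0 < r) :
    closedBall x.1 (r / 2) ×ˢ closedBall x.2 (r * max r ‖x.1‖ / 4) ⊆ grushinBall x r := by
  rintro y ⟨h₁, h₂⟩
  rw [mem_closedBall, dist_comm, dist_eq_norm] at h₁ h₂
  show grushinDist x y ≤ r
  rcases le_total ‖x.1‖ r with hx | hx
  · have hsqrt : √‖x.2 - y.2‖ ≤ r / 2 := by
      rw [max_eq_left hx] at h₂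
      exact Real.sqrt_le_iff.mpr ⟨by positivity, by linarith⟩
    linarith [grushinDist_le_add_sqrt x y]
  · have hx₀ : 0 < ‖x.1‖ := hr.trans_le hx
    have hdiv : ‖x.2 - y.2‖ / (‖x.1‖ + ‖y.1‖) ≤ r / 4 :=
      calc ‖x.2 - y.2‖ / (‖x.1‖ + ‖y.1‖) ≤ ‖x.2 - y.2‖ / ‖x.1‖ := by
            gcongr
            exact le_add_of_nonneg_right (norm_nonneg _)
        _ ≤ r * ‖x.1‖ / 4 / ‖x.1‖ := by rw [max_eq_right hx] at h₂; gcongr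
        _ = r / 4 := by field_simp
    linarith [grushinDist_le_add_div x y (by positivity)]

theorem grushinBall_subset_closedBall_prod {r : ℝ} :
    grushinBall x r ⊆ closedBall x.1 r ×ˢ closedBall x.2 (3 * r * max r ‖x.1‖) := by
  intro y (hy : grushinDist x y ≤ r)
  have h₁ : ‖x.1 - y.1‖ ≤ r := (norm_fst_sub_le_grushinDist x y).trans hy
  have hg : 0 ≤ grushinDist x y := (norm_nonneg _).trans (norm_fst_sub_le_grushinDist x y)
  have hr : 0 ≤ r := hg.trans hy
  have hy₁ : ‖y.1‖ ≤ ‖x.1‖ + r := by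
    linarith [norm_le_norm_add_norm_sub' y.1 x.1, norm_sub_rev x.1 y.1]
  refine ⟨by rwa [mem_closedBall, dist_comm, dist_eq_norm], ?_⟩
  rw [mem_closedBall, dist_comm, dist_eq_norm]
  calc ‖x.2 - y.2‖ ≤ grushinDist x y * max (grushinDist x y) (‖x.1‖ + ‖y.1‖) :=
        norm_snd_sub_le_grushinDist_mul x y
    _ ≤ r * max r (‖x.1‖ + (‖x.1‖ + r)) := by gcongr
    _ ≤ r * (3 * max r ‖x.1‖) := by
        gcongr
        have := le_max_left r ‖x.1‖
        exact max_le (by linarith) (by linarith [le_max_right r ‖x.1‖])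
    _ = 3 * r * max r ‖x.1‖ := by ring

end Grushin

theorem grushinBall_volume_general (d₁ d₂ : ℕ) :
    ∃ c C : ℝ, 0 < c ∧ 0 < C ∧
      ∀ (x : EuclideanSpace ℝ (Fin d₁) × EuclideanSpace ℝ (Fin d₂)) (r : ℝ), 0 < r →
        ENNReal.ofReal (c * r ^ (d₁ + d₂) * (max r ‖x.1‖) ^ d₂) ≤
            volume (grushinBall x r) ∧
          volume (grushinBall x r) ≤
            ENNReal.ofReal (C * r ^ (d₁ + d₂) * (max r ‖x.1‖) ^ d₂) := by
  set k := volume.real (ball (0 : EuclideanSpace ℝ (Fin d₁)) 1) *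
    volume.real (ball (0 : EuclideanSpace ℝ (Fin d₂)) 1) with hk_def
  have hk : 0 < k := mul_pos volume_real_unitBall_pos volume_real_unitBall_pos
  refine ⟨(1 / 2) ^ d₁ * (1 / 4) ^ d₂ * k, 3 ^ d₂ * k, by positivity, by positivity,
    fun x r hr => ⟨?_, ?_⟩⟩
  · calc _ = volume (closedBall x.1 (r / 2) ×ˢ closedBall x.2 (r * max r ‖x.1‖ / 4)) := by
          rw [volume_closedBall_prod_closedBall _ _ (by positivity) (by positivity),
            finrank_euclideanSpace_fin, finrank_euclideanSpace_fin, hk_def]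
          ring_nf
      _ ≤ _ := measure_mono (closedBall_prod_subset_grushinBall x hr)
  · calc _ ≤ volume (closedBall x.1 r ×ˢ closedBall x.2 (3 * r * max r ‖x.1‖)) :=
          measure_mono (grushinBall_subset_closedBall_prod x)
      _ = _ := by
          rw [volume_closedBall_prod_closedBall _ _ hr.le (by positivity),
            finrank_euclideanSpace_fin, finrank_euclideanSpace_fin, hk_def]
          ring_nf

/-- The Lebesgue measure of the Grushin ball `B^ϱ(x, r)` is comparable to
`r^{d₁+d₂} · max{r, |x'|}^{d₂}`, with comparison constants depending only on `d₁, d₂`. -/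
theorem grushinBall_volume (d₁ d₂ : ℕ) (hd₁ : 1 ≤ d₁) (hd₂ : 1 ≤ d₂) :
    ∃ c C : ℝ, 0 < c ∧ 0 < C ∧
      ∀ (x : EuclideanSpace ℝ (Fin d₁) × EuclideanSpace ℝ (Fin d₂)) (r : ℝ), 0 < r →
        ENNReal.ofReal (c * r ^ (d₁ + d₂) * (max r ‖x.1‖) ^ d₂) ≤
            volume (grushinBall x r) ∧
          volume (grushinBall x r) ≤
            ENNReal.ofReal (C * r ^ (d₁ + d₂) * (max r ‖x.1‖) ^ d₂) :=
  grushinBall_volume_general d₁ d₂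
end

section
/- Let M > Q = d₁ + 2 d₂. Then there exists a constant C > 0, depending only on d₁, d₂ and M, such that for every R > 0, every r > 0 and every x = (x', x'') ∈ ℝ^{d₁} × ℝ^{d₂}, one has ∫_{{y : ϱ(x, y) ≥ r}} (1 + R ϱ(x, y))^{−M} dy ≤ C R^{−M} r^{−M + d₁ + d₂} · max{r, |x'|}^{d₂}, where the integral is with respect to Lebesgue measure on ℝ^d. -/
open MeasureTheory

open Metric
open scoped ENNReal

lemma exists_annulus {r t : ℝ} (hr : 0 < r) (h : r ≤ t) :
    ∃ k : ℕ, 2 ^ k * r ≤ t ∧ t ≤ 2 ^ (k + 1) * r := by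
  classical
  have h1 : ∃ n : ℕ, t / r < 2 ^ n := pow_unbounded_of_one_lt _ one_lt_two
  have hn : t / r < 2 ^ (Nat.find h1) := Nat.find_spec h1
  have hge : (1 : ℝ) ≤ t / r := (one_le_div hr).mpr h
  have hn0 : Nat.find h1 ≠ 0 := by
    intro h0
    rw [h0, pow_zero] at hn; linarith
  obtain ⟨k, hk⟩ := Nat.exists_eq_succ_of_ne_zero hn0
  rw [hk, Nat.succ_eq_add_one] at hn
  refine ⟨k, ?_, ?_⟩
  · have hmin := Nat.find_min h1 (by omega : k < Nat.find h1)
    push_neg at hmin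
    exact (le_div_iff₀ hr).mp hmin
  · have := (div_lt_iff₀ hr).mp hn
    linarith

variable {d₁ d₂ : ℕ}

lemma grushin_nonneg (x y : EuclideanSpace ℝ (Fin d₁) × EuclideanSpace ℝ (Fin d₂)) :
    0 ≤ grushinDist x y := by
  unfold grushinDist
  split_ifs <;> positivity

lemma grushin_fst_le (x y : EuclideanSpace ℝ (Fin d₁) × EuclideanSpace ℝ (Fin d₂)) :
    ‖x.1 - y.1‖ ≤ grushinDist x y := by
  unfold grushinDist
  split_ifs with h
  · have : 0 ≤ ‖x.2 - y.2‖ / (‖x.1‖ + ‖y.1‖) := by positivity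
    linarith
  · have : 0 ≤ Real.sqrt ‖x.2 - y.2‖ := Real.sqrt_nonneg _
    linarith

lemma grushin_ball_subset {s : ℝ} (hs : 0 ≤ s)
    (x y : EuclideanSpace ℝ (Fin d₁) × EuclideanSpace ℝ (Fin d₂))
    (h : grushinDist x y ≤ s) :
    ‖x.1 - y.1‖ ≤ s ∧ ‖x.2 - y.2‖ ≤ s * (s + 2 * ‖x.1‖) := by
  have h1 : ‖x.1 - y.1‖ ≤ s := le_trans (grushin_fst_le x y) h
  refine ⟨h1, ?_⟩
  have ha : (0:ℝ) ≤ ‖x.1‖ := norm_nonneg _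
  have hb : (0:ℝ) ≤ ‖y.1‖ := norm_nonneg _
  have hn : (0:ℝ) ≤ ‖x.2 - y.2‖ := norm_nonneg _
  have hby : ‖y.1‖ ≤ ‖x.1‖ + s := by
    have := norm_sub_norm_le y.1 x.1
    rw [norm_sub_rev y.1 x.1] at this
    linarith
  unfold grushinDist at h
  split_ifs at h with hc
  · rcases eq_or_lt_of_le (by positivity : (0:ℝ) ≤ ‖x.1‖ + ‖y.1‖) with he | he
    · have : Real.sqrt ‖x.2 - y.2‖ = 0 :=
        le_antisymm (by rw [← he] at hc; exact hc) (Real.sqrt_nonneg _)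
      have h0 : ‖x.2 - y.2‖ = 0 := le_antisymm (Real.sqrt_eq_zero'.mp this) hn
      nlinarith
    · have hdiv : ‖x.2 - y.2‖ / (‖x.1‖ + ‖y.1‖) ≤ s := by
        have h0 : 0 ≤ ‖x.1 - y.1‖ := norm_nonneg _
        nlinarith [h]
      have : ‖x.2 - y.2‖ ≤ s * (‖x.1‖ + ‖y.1‖) := by
        rw [div_le_iff₀ he] at hdiv
        linarith
      nlinarith
  · push_neg at hc
    have hsq : Real.sqrt ‖x.2 - y.2‖ ≤ s := by
      have h0 : 0 ≤ ‖x.1 - y.1‖ := norm_nonneg _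
      linarith
    have : ‖x.2 - y.2‖ ≤ s ^ 2 := by
      have := Real.sq_sqrt hn
      nlinarith [Real.sqrt_nonneg ‖x.2 - y.2‖]
    nlinarith

lemma grushin_measurable (x : EuclideanSpace ℝ (Fin d₁) × EuclideanSpace ℝ (Fin d₂)) :
    Measurable (grushinDist x) := by
  unfold grushinDist
  have hc1 : Continuous fun y : EuclideanSpace ℝ (Fin d₁) × EuclideanSpace ℝ (Fin d₂) =>
      Real.sqrt ‖x.2 - y.2‖ :=
    Real.continuous_sqrt.comp ((continuous_const.sub continuous_snd).norm)
  have hc2 : Continuous fun y : EuclideanSpace ℝ (Fin d₁) × EuclideanSpace ℝ (Fin d₂) =>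
      ‖x.1‖ + ‖y.1‖ := continuous_const.add continuous_fst.norm
  have hc3 : Continuous fun y : EuclideanSpace ℝ (Fin d₁) × EuclideanSpace ℝ (Fin d₂) =>
      ‖x.1 - y.1‖ := (continuous_const.sub continuous_fst).norm
  have hc4 : Continuous fun y : EuclideanSpace ℝ (Fin d₁) × EuclideanSpace ℝ (Fin d₂) =>
      ‖x.2 - y.2‖ := (continuous_const.sub continuous_snd).norm
  exact Measurable.ite (measurableSet_le hc1.measurable hc2.measurable)
    (hc3.measurable.add (hc4.measurable.div hc2.measurable))
    (hc3.measurable.add hc1.measurable)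

lemma key_eq (d₁ d₂ : ℕ) (M R r m V : ℝ) (hR : 0 < R) (hr : 0 < r) (k : ℕ) :
    (R * 2 ^ k * r) ^ (-M) * ((2 ^ (k + 1) * r) ^ d₁ * ((2 ^ (2 * k + 3) * r * m) ^ d₂ * V))
      = (2 ^ (d₁ + 3 * d₂) * V * (R ^ (-M) * r ^ (-M + (d₁ : ℝ) + d₂) * m ^ d₂)) *
        ((2 : ℝ) ^ (((d₁ : ℝ) + 2 * d₂) - M)) ^ k := by
  have h2 : (0:ℝ) < 2 := two_pos
  have e1 : (R * 2 ^ k * r) ^ (-M)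
      = R ^ (-M) * (2:ℝ) ^ ((k : ℝ) * (-M)) * r ^ (-M) := by
    rw [Real.mul_rpow (by positivity) hr.le, Real.mul_rpow hR.le (by positivity),
      ← Real.rpow_natCast 2 k, ← Real.rpow_mul h2.le]
  have e2 : ((2:ℝ) ^ (k + 1) * r) ^ d₁
      = (2:ℝ) ^ ((((k:ℝ) + 1)) * d₁) * r ^ ((d₁:ℝ)) := by
    rw [mul_pow, ← Real.rpow_natCast ((2:ℝ) ^ (k+1)) d₁, ← Real.rpow_natCast 2 (k+1),
      ← Real.rpow_mul h2.le, ← Real.rpow_natCast r d₁]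
    congr 1
    push_cast; ring
  have e3 : ((2:ℝ) ^ (2 * k + 3) * r * m) ^ d₂
      = (2:ℝ) ^ ((2 * (k:ℝ) + 3) * d₂) * r ^ ((d₂:ℝ)) * m ^ d₂ := by
    rw [mul_pow, mul_pow, ← Real.rpow_natCast ((2:ℝ) ^ (2*k+3)) d₂,
      ← Real.rpow_natCast 2 (2*k+3), ← Real.rpow_mul h2.le, ← Real.rpow_natCast r d₂]
    congr 2
    push_cast; ring
  have e4 : (2:ℝ) ^ (d₁ + 3 * d₂) = (2:ℝ) ^ ((d₁:ℝ) + 3 * d₂) := by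
    rw [← Real.rpow_natCast 2 (d₁ + 3 * d₂)]; congr 1; push_cast; ring
  have e5 : ((2 : ℝ) ^ (((d₁ : ℝ) + 2 * d₂) - M)) ^ k
      = (2:ℝ) ^ ((((d₁ : ℝ) + 2 * d₂) - M) * k) := by
    rw [← Real.rpow_natCast ((2:ℝ) ^ (((d₁ : ℝ) + 2 * d₂) - M)) k, ← Real.rpow_mul h2.le]
  have e6 : r ^ (-M + (d₁ : ℝ) + d₂) = r ^ (-M) * r ^ ((d₁:ℝ)) * r ^ ((d₂:ℝ)) := by
    rw [← Real.rpow_add hr, ← Real.rpow_add hr]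
  rw [e1, e2, e3, e4, e5, e6]
  have e7 : (2:ℝ) ^ ((k : ℝ) * (-M)) * ((2:ℝ) ^ ((((k:ℝ) + 1)) * d₁) *
      (2:ℝ) ^ ((2 * (k:ℝ) + 3) * d₂))
      = (2:ℝ) ^ ((d₁:ℝ) + 3 * d₂) * (2:ℝ) ^ ((((d₁ : ℝ) + 2 * d₂) - M) * k) := by
    rw [← Real.rpow_add h2, ← Real.rpow_add h2, ← Real.rpow_add h2]
    congr 1; ring
  linear_combination (R ^ (-M) * r ^ (-M) * r ^ ((d₁:ℝ)) * r ^ ((d₂:ℝ)) * m ^ d₂ * V) * e7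

set_option maxHeartbeats 1600000 in
/-- For `M > Q = d₁ + 2 d₂`, the integral of `(1 + R ϱ(x, y))^{-M}` over the region
`ϱ(x, y) ≥ r` is bounded by `C R^{-M} r^{-M + d₁ + d₂} max{r, |x'|}^{d₂}`, with `C`
depending only on `d₁, d₂, M`. -/
theorem grushin_integral_outside_ball (d₁ d₂ : ℕ) (hd₁ : 1 ≤ d₁) (hd₂ : 1 ≤ d₂)
    (M : ℝ) (hM : (d₁ : ℝ) + 2 * d₂ < M) :
    ∃ C : ℝ, 0 < C ∧
      ∀ (R r : ℝ), 0 < R → 0 < r →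
        ∀ x : EuclideanSpace ℝ (Fin d₁) × EuclideanSpace ℝ (Fin d₂),
          (∫ y in {y : EuclideanSpace ℝ (Fin d₁) × EuclideanSpace ℝ (Fin d₂) |
              r ≤ grushinDist x y}, (1 + R * grushinDist x y) ^ (-M)) ≤
            C * R ^ (-M) * r ^ (-M + (d₁ : ℝ) + d₂) * (max r ‖x.1‖) ^ d₂ := by
  have hd₁' : (1:ℝ) ≤ (d₁:ℝ) := by exact_mod_cast hd₁
  have hd₂' : (1:ℝ) ≤ (d₂:ℝ) := by exact_mod_cast hd₂
  have hM0 : 0 < M := by linarith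
  set t : ℝ := (2:ℝ) ^ (((d₁:ℝ) + 2 * d₂) - M) with ht
  have ht0 : 0 < t := Real.rpow_pos_of_pos two_pos _
  have ht1 : t < 1 := Real.rpow_lt_one_of_one_lt_of_neg one_lt_two (by linarith)
  set v₁ : ℝ≥0∞ := volume (ball (0 : EuclideanSpace ℝ (Fin d₁)) 1) with hv₁
  set v₂ : ℝ≥0∞ := volume (ball (0 : EuclideanSpace ℝ (Fin d₂)) 1) with hv₂
  have hv₁pos : 0 < v₁ := measure_ball_pos _ _ one_pos
  have hv₂pos : 0 < v₂ := measure_ball_pos _ _ one_pos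
  have hv₁top : v₁ ≠ ⊤ := measure_ball_lt_top.ne
  have hv₂top : v₂ ≠ ⊤ := measure_ball_lt_top.ne
  set V : ℝ := v₁.toReal * v₂.toReal with hV
  have hVpos : 0 < V :=
    mul_pos (ENNReal.toReal_pos hv₁pos.ne' hv₁top) (ENNReal.toReal_pos hv₂pos.ne' hv₂top)
  have hCpos : 0 < 2 ^ (d₁ + 3 * d₂) * V * (1 - t)⁻¹ :=
    mul_pos (mul_pos (by positivity) hVpos) (inv_pos.mpr (by linarith))
  refine ⟨2 ^ (d₁ + 3 * d₂) * V * (1 - t)⁻¹, hCpos, ?_⟩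
  intro R r hR hr x
  set m : ℝ := max r ‖x.1‖ with hm
  have hm0 : 0 < m := lt_of_lt_of_le hr (le_max_left _ _)
  set ϱ : EuclideanSpace ℝ (Fin d₁) × EuclideanSpace ℝ (Fin d₂) → ℝ := grushinDist x with hϱ
  have hϱmeas : Measurable ϱ := grushin_measurable x
  have hbase : ∀ y, 0 < 1 + R * ϱ y := fun y => by nlinarith [grushin_nonneg x y]
  set f : EuclideanSpace ℝ (Fin d₁) × EuclideanSpace ℝ (Fin d₂) → ℝ :=
    fun y => (1 + R * ϱ y) ^ (-M) with hf
  have hfmeas : Measurable f := by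
    have : f = fun y => Real.exp (Real.log (1 + R * ϱ y) * (-M)) :=
      funext fun y => Real.rpow_def_of_pos (hbase y) _
    rw [this]
    exact Real.measurable_exp.comp
      (((measurable_const.add (measurable_const.mul hϱmeas)).log).mul measurable_const)
  have hf0 : ∀ y, 0 ≤ f y := fun y => Real.rpow_nonneg (hbase y).le _
  rw [integral_eq_lintegral_of_nonneg_ae (Filter.Eventually.of_forall hf0)
    hfmeas.aestronglyMeasurable]
  set A : ℕ → Set (EuclideanSpace ℝ (Fin d₁) × EuclideanSpace ℝ (Fin d₂)) :=
    fun k => {y | 2 ^ k * r ≤ ϱ y ∧ ϱ y ≤ 2 ^ (k + 1) * r} with hA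
  have hsub : {y | r ≤ ϱ y} ⊆ ⋃ k, A k := by
    intro y hy
    obtain ⟨k, h1, h2⟩ := exists_annulus hr hy
    exact Set.mem_iUnion.mpr ⟨k, h1, h2⟩
  have per : ∀ k : ℕ, (∫⁻ y in A k, ENNReal.ofReal (f y)) ≤
      ENNReal.ofReal ((R * 2 ^ k * r) ^ (-M) *
        ((2 ^ (k + 1) * r) ^ d₁ * ((2 ^ (2 * k + 3) * r * m) ^ d₂ * V))) := by
    intro k
    set s : ℝ := 2 ^ (k + 1) * r with hs
    have hs0 : 0 < s := by positivity
    have hRk : 0 < R * 2 ^ k * r := by positivity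
    set u : ℝ := s * (s + 2 * ‖x.1‖) with hu
    have hu0 : 0 ≤ u := by positivity
    set u' : ℝ := 2 ^ (2 * k + 3) * r * m with hu'
    have huu' : u ≤ u' := by
      have h1 : s + 2 * ‖x.1‖ ≤ 2 ^ (k + 2) * m := by
        have hrm : r ≤ m := le_max_left _ _
        have ham : ‖x.1‖ ≤ m := le_max_right _ _
        have : (2:ℝ) ^ (k + 1) + 2 ≤ 2 ^ (k + 2) := by
          have : (1:ℝ) ≤ 2 ^ k := one_le_pow₀ one_le_two
          rw [pow_succ, pow_succ, pow_succ]
          nlinarith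
        have hp : (0:ℝ) < 2 ^ (k+1) := by positivity
        rw [hs]
        nlinarith
      calc u = s * (s + 2 * ‖x.1‖) := hu
        _ ≤ (2 ^ (k + 1) * r) * (2 ^ (k + 2) * m) := by
            apply mul_le_mul (le_of_eq hs) h1 (by positivity) (by positivity)
        _ = u' := by rw [hu']; ring
    calc (∫⁻ y in A k, ENNReal.ofReal (f y))
        ≤ ∫⁻ _ in A k, ENNReal.ofReal ((R * 2 ^ k * r) ^ (-M)) := by
          apply setLIntegral_mono measurable_const
          intro y hy
          apply ENNReal.ofReal_le_ofReal
          apply Real.rpow_le_rpow_of_nonpos hRk _ (by linarith)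
          have := hy.1
          nlinarith
      _ = ENNReal.ofReal ((R * 2 ^ k * r) ^ (-M)) * volume (A k) := setLIntegral_const _ _
      _ ≤ ENNReal.ofReal ((R * 2 ^ k * r) ^ (-M)) *
            volume (closedBall x.1 s ×ˢ closedBall x.2 u) := by
          gcongr
          intro y hy
          obtain ⟨h1, h2⟩ := grushin_ball_subset hs0.le x y hy.2
          constructor
          · rw [mem_closedBall, dist_eq_norm, norm_sub_rev]; exact h1
          · rw [mem_closedBall, dist_eq_norm, norm_sub_rev]; exact h2
      _ = ENNReal.ofReal ((R * 2 ^ k * r) ^ (-M)) *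
            (ENNReal.ofReal (s ^ d₁) * v₁ * (ENNReal.ofReal (u ^ d₂) * v₂)) := by
          rw [Measure.volume_eq_prod, Measure.prod_prod,
            Measure.addHaar_closedBall _ _ hs0.le, Measure.addHaar_closedBall _ _ hu0,
            finrank_euclideanSpace_fin, finrank_euclideanSpace_fin, hv₁, hv₂]
      _ ≤ ENNReal.ofReal ((R * 2 ^ k * r) ^ (-M)) *
            (ENNReal.ofReal (s ^ d₁) * ENNReal.ofReal v₁.toReal *
              (ENNReal.ofReal (u' ^ d₂) * ENNReal.ofReal v₂.toReal)) := by
          rw [ENNReal.ofReal_toReal hv₁top, ENNReal.ofReal_toReal hv₂top]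
          gcongr
      _ = ENNReal.ofReal ((R * 2 ^ k * r) ^ (-M) *
            ((2 ^ (k + 1) * r) ^ d₁ * ((2 ^ (2 * k + 3) * r * m) ^ d₂ * V))) := by
          rw [← ENNReal.ofReal_mul (by positivity), ← ENNReal.ofReal_mul (by positivity),
            ← ENNReal.ofReal_mul (by positivity), ← ENNReal.ofReal_mul (by positivity)]
          congr 1
          rw [hV, hs, hu']
          ring
  have hc₀ : 0 < 2 ^ (d₁ + 3 * d₂) * V * (R ^ (-M) * r ^ (-M + (d₁ : ℝ) + d₂) * m ^ d₂) := by
    have h1 : (0:ℝ) < R ^ (-M) := Real.rpow_pos_of_pos hR _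
    have h2 : (0:ℝ) < r ^ (-M + (d₁ : ℝ) + d₂) := Real.rpow_pos_of_pos hr _
    positivity
  have total : (∫⁻ y in {y | r ≤ ϱ y}, ENNReal.ofReal (f y)) ≤
      ENNReal.ofReal ((2 ^ (d₁ + 3 * d₂) * V *
        (R ^ (-M) * r ^ (-M + (d₁ : ℝ) + d₂) * m ^ d₂)) * (1 - t)⁻¹) := by
    calc (∫⁻ y in {y | r ≤ ϱ y}, ENNReal.ofReal (f y))
        ≤ ∫⁻ y in ⋃ k, A k, ENNReal.ofReal (f y) := lintegral_mono_set hsub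
      _ ≤ ∑' k, ∫⁻ y in A k, ENNReal.ofReal (f y) := lintegral_iUnion_le _ _
      _ ≤ ∑' k : ℕ, ENNReal.ofReal ((2 ^ (d₁ + 3 * d₂) * V *
            (R ^ (-M) * r ^ (-M + (d₁ : ℝ) + d₂) * m ^ d₂)) * t ^ k) := by
          apply ENNReal.tsum_le_tsum
          intro k
          refine (per k).trans (le_of_eq ?_)
          congr 1
          rw [ht]
          exact key_eq d₁ d₂ M R r m V hR hr k
      _ = ENNReal.ofReal (2 ^ (d₁ + 3 * d₂) * V *
            (R ^ (-M) * r ^ (-M + (d₁ : ℝ) + d₂) * m ^ d₂)) * ∑' k : ℕ, (ENNReal.ofReal t) ^ k := by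
          rw [← ENNReal.tsum_mul_left]
          congr 1
          funext k
          rw [ENNReal.ofReal_mul hc₀.le, ENNReal.ofReal_pow ht0.le]
          
      _ = ENNReal.ofReal (2 ^ (d₁ + 3 * d₂) * V *
            (R ^ (-M) * r ^ (-M + (d₁ : ℝ) + d₂) * m ^ d₂)) * ENNReal.ofReal ((1 - t)⁻¹) := by
          rw [ENNReal.tsum_geometric]
          congr 1
          rw [ENNReal.ofReal_inv_of_pos (by linarith), ENNReal.ofReal_sub _ ht0.le,
            ENNReal.ofReal_one]
      _ = ENNReal.ofReal ((2 ^ (d₁ + 3 * d₂) * V *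
            (R ^ (-M) * r ^ (-M + (d₁ : ℝ) + d₂) * m ^ d₂)) * (1 - t)⁻¹) := by
          rw [← ENNReal.ofReal_mul hc₀.le]
  apply ENNReal.toReal_le_of_le_ofReal
  · have h1 : (0:ℝ) < R ^ (-M) := Real.rpow_pos_of_pos hR _
    have h2 : (0:ℝ) < r ^ (-M + (d₁ : ℝ) + d₂) := Real.rpow_pos_of_pos hr _
    positivity
  · refine total.trans (le_of_eq ?_)
    congr 1
    ring
end

section
/- Let F ∈ L²(ℝ) be even with support contained in [−1, 1], and let η : ℝ → ℝ be a smooth even function supported in {ξ : 1/4 ≤ |ξ| ≤ 1}. For l ≥ 1 define F^{(l)}(u) = (2π)^{−1} ∫_ℝ η(2^{−l} ξ) F̂(ξ) cos(u ξ) dξ, where F̂(ξ) = ∫_ℝ F(x) e^{−i x ξ} dx. Then for every N ∈ ℕ there exists a constant C > 0, depending only on N and η, such that for all l ≥ 1 and all u ∈ ℝ with |u| ≥ 2, |F^{(l)}(u)| ≤ C 2^{−N l} (1 + |u|)^{−N} ‖F‖_{L²(ℝ)}. -/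
open MeasureTheory

open Real Complex ENNReal FourierTransform in
private lemma hcs_iteratedDeriv' {f : ℝ → ℂ} (h : HasCompactSupport f) (n : ℕ) :
    HasCompactSupport (iteratedDeriv n f) := by
  induction n with
  | zero => simpa using h
  | succ n ih => rw [iteratedDeriv_succ]; exact ih.deriv

open Real Complex ENNReal FourierTransform in
private lemma bump_decay (η : ℝ → ℝ) (hη_smooth : ContDiff ℝ (⊤ : ℕ∞) η)
    (hsupp : ∀ ξ, η ξ ≠ 0 → |ξ| ≤ 1) (M : ℕ) :
    ∃ D : ℝ, 0 < D ∧ ∀ s : ℝ,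
      ‖∫ t : ℝ, (η t : ℂ) * Complex.exp (Complex.I * s * t)‖ ≤ D * (1 + |s|) ^ (-(M : ℝ)) := by
  set f : ℝ → ℂ := fun t => (η t : ℂ) with hf
  have hfc : ContDiff ℝ (⊤ : ℕ∞) f := Complex.ofRealCLM.contDiff.comp hη_smooth
  have hsupp' : Function.support f ⊆ Set.Icc (-1) 1 := by
    intro x hx
    have : η x ≠ 0 := by simpa [hf] using hx
    have := hsupp x this
    rw [abs_le] at this; exact ⟨this.1, this.2⟩
  have hcs : HasCompactSupport f :=
    HasCompactSupport.of_support_subset_isCompact isCompact_Icc hsupp'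
  have hint : ∀ n : ℕ, Integrable (iteratedDeriv n f) := fun n =>
    (hfc.continuous_iteratedDeriv n (by exact_mod_cast le_top)).integrable_of_hasCompactSupport
      (hcs_iteratedDeriv' hcs n)
  have hFT : 𝓕 (iteratedDeriv M f) = fun ξ : ℝ => (2 * π * Complex.I * ξ) ^ M • 𝓕 f ξ :=
    Real.fourier_iteratedDeriv (N := (⊤ : ℕ∞)) (hfc.of_le (by simp))
      (fun k _ => hint k) le_top
  have hG : ∀ s : ℝ, (∫ t : ℝ, f t * Complex.exp (Complex.I * s * t)) = 𝓕 f (-(s / (2 * π))) := by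
    intro s
    rw [Real.fourier_eq']
    refine integral_congr_ae (Filter.Eventually.of_forall fun t => ?_)
    have hi : inner ℝ t (-(s / (2 * π))) = t * -(s / (2 * π)) := by simp [mul_comm]
    beta_reduce
    rw [hi]
    show f t * Complex.exp (Complex.I * s * t)
      = Complex.exp (((-2 * π * (t * -(s / (2 * π))) : ℝ) : ℂ) * Complex.I) • f t
    rw [smul_eq_mul, mul_comm]
    congr 1
    have h2 : (-2 * π * (t * (-(s / (2 * π)))) : ℝ) = s * t := by
      field_simp
    rw [h2]
    push_cast
    ring
  have hnormbd : ∀ (g : ℝ → ℂ) (w : ℝ), ‖𝓕 g w‖ ≤ ∫ x, ‖g x‖ := fun g w =>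
    VectorFourier.norm_fourierIntegral_le_integral_norm _ _ _ _ _
  have hI0 : 0 ≤ ∫ x, ‖f x‖ := integral_nonneg fun x => norm_nonneg _
  have hIM : 0 ≤ ∫ x, ‖iteratedDeriv M f x‖ := integral_nonneg fun x => norm_nonneg _
  set A : ℝ := (∫ x, ‖f x‖) + ∫ x, ‖iteratedDeriv M f x‖ with hA
  have hA0 : 0 ≤ A := by positivity
  refine ⟨2 ^ M * A + 1, by positivity, fun s => ?_⟩
  set w : ℝ := -(s / (2 * π)) with hw
  have hpos : (0:ℝ) < 1 + |s| := by positivity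
  have habs : (2 * π) * |w| = |s| := by
    rw [hw, abs_neg, abs_div, abs_of_pos (by positivity : (0:ℝ) < 2 * π)]
    field_simp
  have e1 : |s| ^ M * ‖𝓕 f w‖ ≤ ∫ x, ‖iteratedDeriv M f x‖ := by
    have hb := hnormbd (iteratedDeriv M f) w
    rw [hFT] at hb
    calc |s| ^ M * ‖𝓕 f w‖ = ‖(2 * (π:ℂ) * Complex.I * (w:ℂ)) ^ M • 𝓕 f w‖ := by
          rw [norm_smul, norm_pow]
          congr 2
          have : ‖2 * (π:ℂ) * Complex.I * (w:ℂ)‖ = 2 * π * |w| := by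
            simp [abs_of_pos Real.pi_pos]
          rw [this, habs]
      _ ≤ _ := hb
  have e0 : ‖𝓕 f w‖ ≤ ∫ x, ‖f x‖ := hnormbd f w
  have hmax : (1 + |s|) ^ M ≤ 2 ^ M * (1 + |s| ^ M) := by
    have h1 : (1 + |s|) ≤ 2 * max 1 |s| := by
      rcases le_total 1 |s| with h | h
      · rw [max_eq_right h]; linarith
      · rw [max_eq_left h]; linarith [abs_nonneg s]
    have h2 : (1 + |s|) ^ M ≤ (2 * max 1 |s|) ^ M :=
      pow_le_pow_left₀ (by positivity) h1 M
    have h3 : (max 1 |s|) ^ M ≤ 1 + |s| ^ M := by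
      rcases le_total 1 |s| with h | h
      · rw [max_eq_right h]; nlinarith [pow_nonneg (abs_nonneg s) M]
      · rw [max_eq_left h]; simp only [one_pow]
        nlinarith [pow_nonneg (abs_nonneg s) M]
    calc (1 + |s|) ^ M ≤ (2 * max 1 |s|) ^ M := h2
      _ = 2 ^ M * (max 1 |s|) ^ M := by rw [mul_pow]
      _ ≤ 2 ^ M * (1 + |s| ^ M) := by
          exact mul_le_mul_of_nonneg_left h3 (by positivity)
  have key : (1 + |s|) ^ M * ‖𝓕 f w‖ ≤ 2 ^ M * A := by
    have hgn : (0:ℝ) ≤ ‖𝓕 f w‖ := norm_nonneg _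
    calc (1 + |s|) ^ M * ‖𝓕 f w‖ ≤ 2 ^ M * (1 + |s| ^ M) * ‖𝓕 f w‖ :=
          mul_le_mul_of_nonneg_right hmax hgn
      _ = 2 ^ M * (‖𝓕 f w‖ + |s| ^ M * ‖𝓕 f w‖) := by ring
      _ ≤ 2 ^ M * ((∫ x, ‖f x‖) + ∫ x, ‖iteratedDeriv M f x‖) := by
          have := add_le_add e0 e1
          exact mul_le_mul_of_nonneg_left this (by positivity)
      _ = 2 ^ M * A := by rw [hA]
  rw [hG s, ← hw, Real.rpow_neg hpos.le, Real.rpow_natCast, ← div_eq_mul_inv,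
    le_div_iff₀ (by positivity)]
  nlinarith [key]

open Real ENNReal in
private lemma l1_bound' (F : ℝ → ℂ) (hF : MemLp F 2 volume) (hsupp : ∀ x, F x ≠ 0 → |x| ≤ 1) :
    Integrable F volume ∧ (∫ x, ‖F x‖) ≤ 2 * (eLpNorm F 2 volume).toReal := by
  have hsupp' : ∀ x, x ∉ Set.Icc (-1 : ℝ) 1 → F x = 0 := by
    intro x hx
    by_contra h
    exact hx (abs_le.mp (hsupp x h) |> fun ⟨a, b⟩ => ⟨a, b⟩)
  have hμ : volume (Set.Icc (-1 : ℝ) 1) ≠ ⊤ := by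
    rw [Real.volume_Icc]; exact ENNReal.ofReal_ne_top
  have hm1 : MemLp F 1 volume :=
    hF.mono_exponent_of_measure_support_ne_top hsupp' hμ one_le_two
  have hInt : Integrable F volume := memLp_one_iff_integrable.mp hm1
  refine ⟨hInt, ?_⟩
  have hind : Set.indicator (Set.Icc (-1:ℝ) 1) F = F :=
    Set.indicator_eq_self.2 (Function.support_subset_iff'.2 hsupp')
  have h1 : eLpNorm F 1 volume = eLpNorm F 1 (volume.restrict (Set.Icc (-1:ℝ) 1)) := by
    conv_lhs => rw [← hind]
    rw [eLpNorm_indicator_eq_eLpNorm_restrict measurableSet_Icc]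
  have h2 : eLpNorm F 2 (volume.restrict (Set.Icc (-1:ℝ) 1)) = eLpNorm F 2 volume := by
    rw [← eLpNorm_indicator_eq_eLpNorm_restrict measurableSet_Icc, hind]
  have hholder := eLpNorm_le_eLpNorm_mul_rpow_measure_univ (p := 1) (q := 2)
    (one_le_two) (hF.1.restrict (s := Set.Icc (-1:ℝ) 1))
  rw [h2] at hholder
  rw [← h1] at hholder
  have hμuniv : (volume.restrict (Set.Icc (-1:ℝ) 1)) Set.univ = ENNReal.ofReal 2 := by
    rw [Measure.restrict_apply_univ, Real.volume_Icc]; norm_num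
  rw [hμuniv] at hholder
  have hexp : (1 / (1:ℝ≥0∞).toReal - 1 / (2:ℝ≥0∞).toReal) = (1/2 : ℝ) := by norm_num
  rw [hexp] at hholder
  have hfin : eLpNorm F 2 volume ≠ ⊤ := hF.2.ne
  have hbd : ENNReal.ofReal 2 ^ ((1:ℝ)/2) ≤ 2 := by
    rw [ENNReal.ofReal_ofNat]
    calc (2:ℝ≥0∞) ^ ((1:ℝ)/2) ≤ 2 ^ (1:ℝ) := by
          apply ENNReal.rpow_le_rpow_of_exponent_le (by norm_num) (by norm_num)
      _ = 2 := by simp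
  have hholder2 : eLpNorm F 1 volume ≤ 2 * eLpNorm F 2 volume := by
    refine hholder.trans ?_
    rw [mul_comm]
    exact mul_le_mul_left hbd _
  have hLHS : (∫ x, ‖F x‖) = (eLpNorm F 1 volume).toReal := by
    rw [eLpNorm_one_eq_lintegral_enorm, integral_norm_eq_lintegral_enorm hF.1]
  rw [hLHS]
  calc (eLpNorm F 1 volume).toReal ≤ (2 * eLpNorm F 2 volume).toReal :=
        ENNReal.toReal_mono (by finiteness) hholder2
    _ = 2 * (eLpNorm F 2 volume).toReal := by
        rw [ENNReal.toReal_mul]; norm_num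

/-- The Fourier transform `F̂(ξ) = ∫ F(x) e^{-i x ξ} dx`. -/
noncomputable def fourierHat (F : ℝ → ℂ) (ξ : ℝ) : ℂ :=
  ∫ x : ℝ, F x * Complex.exp (-(Complex.I * (x : ℂ) * (ξ : ℂ)))

/-- The dyadic piece `F^{(l)}(u) = (2π)⁻¹ ∫ η(2^{-l} ξ) F̂(ξ) cos(u ξ) dξ`. -/
noncomputable def dyadicPiece (η : ℝ → ℝ) (F : ℝ → ℂ) (l : ℕ) (u : ℝ) : ℂ :=
  ((2 * Real.pi)⁻¹ : ℝ) •
    ∫ ξ : ℝ, (η (2 ^ (-(l : ℝ)) * ξ) : ℂ) * fourierHat F ξ * (Real.cos (u * ξ) : ℂ)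

/-- For `η` a smooth even bump supported in `{1/4 ≤ |ξ| ≤ 1}` and `F ∈ L²(ℝ)` even with
support in `[-1, 1]`, the dyadic pieces `F^{(l)}` decay rapidly away from the support of
`F`: for every `N` there is `C = C(N, η) > 0` with
`|F^{(l)}(u)| ≤ C 2^{-N l} (1 + |u|)^{-N} ‖F‖_{L²}` for all `l ≥ 1` and `|u| ≥ 2`. -/
theorem dyadicPiece_decay (η : ℝ → ℝ) (hη_smooth : ContDiff ℝ (⊤ : ℕ∞) η)
    (hη_even : ∀ ξ, η (-ξ) = η ξ)
    (hη_supp : ∀ ξ, η ξ ≠ 0 → 1 / 4 ≤ |ξ| ∧ |ξ| ≤ 1)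
    (N : ℕ) :
    ∃ C : ℝ, 0 < C ∧
      ∀ F : ℝ → ℂ, MemLp F 2 volume → (∀ x, F (-x) = F x) →
        (∀ x, F x ≠ 0 → |x| ≤ 1) →
        ∀ l : ℕ, 1 ≤ l → ∀ u : ℝ, 2 ≤ |u| →
          ‖dyadicPiece η F l u‖ ≤
            C * (2 : ℝ) ^ (-(N : ℝ) * l) * (1 + |u|) ^ (-(N : ℝ)) *
              (eLpNorm F 2 volume).toReal := by
  obtain ⟨D, hD, hDbd⟩ := bump_decay η hη_smooth (fun ξ h => (hη_supp ξ h).2) (N + 1)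
  set M : ℕ := N + 1 with hM
  refine ⟨(2 * Real.pi)⁻¹ * 2 * (D * 4 ^ M), by positivity, ?_⟩
  intro F hF hFeven hFsupp l hl u hu
  obtain ⟨hInt, hL1⟩ := l1_bound' F hF hFsupp
  have hL1nonneg : 0 ≤ ∫ x, ‖F x‖ := integral_nonneg fun x => norm_nonneg _
  set a : ℝ := 2 ^ (-(l : ℝ)) with ha
  set b : ℝ := 2 ^ (l : ℝ) with hb
  have hb0 : (0:ℝ) < b := Real.rpow_pos_of_pos two_pos _
  have ha0 : (0:ℝ) < a := Real.rpow_pos_of_pos two_pos _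
  have hainv : a⁻¹ = b := by
    rw [ha, hb, Real.rpow_neg (by norm_num), inv_inv]
  have hba : b * a = 1 := by
    rw [← hainv]; exact inv_mul_cancel₀ (ne_of_gt ha0)
  set g : ℝ → ℂ := fun ξ => (η (a * ξ) : ℂ) with hg
  have hgc : Continuous g := Complex.continuous_ofReal.comp
    (hη_smooth.continuous.comp (continuous_const.mul continuous_id))
  have hg_supp : Function.support g ⊆ Set.Icc (-b) b := by
    intro ξ hξ
    have hne : η (a * ξ) ≠ 0 := by simpa [hg] using hξ
    have h1 : |a * ξ| ≤ 1 := (hη_supp _ hne).2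
    rw [abs_mul, abs_of_pos ha0] at h1
    have h2 : |ξ| ≤ 1 / a := (le_div_iff₀ ha0).2 (by linarith [h1])
    rw [one_div, hainv] at h2
    rw [abs_le] at h2
    exact ⟨h2.1, h2.2⟩
  have hgint : Integrable g :=
    hgc.integrable_of_hasCompactSupport
      (HasCompactSupport.of_support_subset_isCompact isCompact_Icc hg_supp)
  -- the rescaled bump transform
  set G : ℝ → ℂ := fun s => ∫ t : ℝ, (η t : ℂ) * Complex.exp (Complex.I * s * t) with hGdef
  -- scaling identity
  have hJ : ∀ y : ℝ, (∫ ξ : ℝ, g ξ * Complex.exp (Complex.I * y * ξ)) = b * G (b * y) := by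
    intro y
    have key := MeasureTheory.Measure.integral_comp_mul_left
      (fun t : ℝ => (η t : ℂ) * Complex.exp (Complex.I * ((b * y : ℝ) : ℂ) * (t : ℂ))) a
    beta_reduce at key
    have hfun : (fun ξ : ℝ => g ξ * Complex.exp (Complex.I * y * ξ))
        = fun ξ : ℝ => (η (a * ξ) : ℂ)
            * Complex.exp (Complex.I * ((b * y : ℝ) : ℂ) * ((a * ξ : ℝ) : ℂ)) := by
      funext ξ
      simp only [hg]
      congr 2
      have hbc : ((b:ℂ)) * ((a:ℂ)) = 1 := by
        rw [← Complex.ofReal_mul, hba, Complex.ofReal_one]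
      push_cast
      linear_combination (-(Complex.I * (y:ℂ) * (ξ:ℂ))) * hbc
    rw [hfun, key, hainv, abs_of_pos hb0, Complex.real_smul, hGdef]
  have hgmul : ∀ y : ℝ, Integrable (fun ξ : ℝ => g ξ * Complex.exp (Complex.I * y * ξ)) := by
    intro y
    have hm : AEStronglyMeasurable (fun ξ : ℝ => Complex.exp (Complex.I * y * ξ)) volume := by
      apply Continuous.aestronglyMeasurable
      exact Complex.continuous_exp.comp
        (continuous_const.mul Complex.continuous_ofReal)
    have := hgint.bdd_mul hm (c := 1) (Filter.Eventually.of_forall fun ξ => le_of_eq (by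
      rw [Complex.norm_exp]; simp [Complex.mul_re]))
    exact this.congr (Filter.Eventually.of_forall fun ξ => mul_comm _ _)
  set K : ℝ → ℂ := fun x =>
    ∫ ξ : ℝ, g ξ * Complex.exp (-(Complex.I * x * ξ)) * (Real.cos (u * ξ) : ℂ) with hK
  have hswap : (∫ ξ : ℝ, g ξ * fourierHat F ξ * (Real.cos (u * ξ) : ℂ))
      = ∫ x : ℝ, F x * K x := by
    have hProdInt : Integrable (fun z : ℝ × ℝ => g z.1 * F z.2
        * (Complex.exp (-(Complex.I * z.2 * z.1)) * (Real.cos (u * z.1) : ℂ)))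
        (volume.prod volume) := by
      have base : Integrable (fun z : ℝ × ℝ => g z.1 * F z.2) (volume.prod volume) :=
        hgint.mul_prod hInt
      have hm : AEStronglyMeasurable (fun z : ℝ × ℝ =>
          Complex.exp (-(Complex.I * z.2 * z.1)) * (Real.cos (u * z.1) : ℂ))
          (volume.prod volume) := by
        apply Continuous.aestronglyMeasurable
        apply Continuous.mul
        · exact Complex.continuous_exp.comp
            (((continuous_const.mul
              (Complex.continuous_ofReal.comp continuous_snd)).mul
              (Complex.continuous_ofReal.comp continuous_fst)).neg)
        · exact Complex.continuous_ofReal.comp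
            (Real.continuous_cos.comp (continuous_const.mul continuous_fst))
      have hbnd : ∀ z : ℝ × ℝ,
          ‖Complex.exp (-(Complex.I * (z.2:ℂ) * (z.1:ℂ))) * ((Real.cos (u * z.1) : ℝ) : ℂ)‖
            ≤ 1 := by
        intro z
        rw [norm_mul]
        have h1 : ‖Complex.exp (-(Complex.I * (z.2:ℂ) * (z.1:ℂ)))‖ = 1 := by
          rw [Complex.norm_exp]; simp [Complex.mul_re]
        have h2 : ‖((Real.cos (u * z.1) : ℝ) : ℂ)‖ ≤ 1 := by
          rw [Complex.norm_real, Real.norm_eq_abs]; exact Real.abs_cos_le_one _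
        rw [h1, one_mul]; exact h2
      have hbdd := base.bdd_mul hm (c := 1) (Filter.Eventually.of_forall hbnd)
      exact hbdd.congr (Filter.Eventually.of_forall fun z => by ring)
    calc (∫ ξ : ℝ, g ξ * fourierHat F ξ * (Real.cos (u * ξ) : ℂ))
        = ∫ ξ : ℝ, ∫ x : ℝ, g ξ * F x
            * (Complex.exp (-(Complex.I * x * ξ)) * (Real.cos (u * ξ) : ℂ)) := by
          refine integral_congr_ae (Filter.Eventually.of_forall fun ξ => ?_)
          beta_reduce
          have : (∫ x : ℝ, g ξ * F x
              * (Complex.exp (-(Complex.I * x * ξ)) * (Real.cos (u * ξ) : ℂ)))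
              = ∫ x : ℝ, (g ξ * (Real.cos (u * ξ) : ℂ))
                * (F x * Complex.exp (-(Complex.I * x * ξ))) :=
            integral_congr_ae (Filter.Eventually.of_forall fun x => by ring)
          rw [this, MeasureTheory.integral_const_mul, fourierHat]
          ring
      _ = ∫ x : ℝ, ∫ ξ : ℝ, g ξ * F x
            * (Complex.exp (-(Complex.I * x * ξ)) * (Real.cos (u * ξ) : ℂ)) :=
          integral_integral_swap hProdInt
      _ = ∫ x : ℝ, F x * K x := by
          refine integral_congr_ae (Filter.Eventually.of_forall fun x => ?_)
          beta_reduce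
          simp only [hK]
          rw [← MeasureTheory.integral_const_mul]
          refine integral_congr_ae (Filter.Eventually.of_forall fun ξ => ?_)
          beta_reduce
          ring
  have hKsplit : ∀ x : ℝ,
      K x = (2:ℂ)⁻¹ * (b * G (b * (u - x)) + b * G (b * (-(u + x)))) := by
    intro x
    have hptwise : (fun ξ : ℝ =>
        g ξ * Complex.exp (-(Complex.I * x * ξ)) * (Real.cos (u * ξ) : ℂ))
        = fun ξ : ℝ => (2:ℂ)⁻¹ * (g ξ * Complex.exp (Complex.I * ((u - x : ℝ) : ℂ) * ξ)
            + g ξ * Complex.exp (Complex.I * ((-(u + x) : ℝ) : ℂ) * ξ)) := by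
      funext ξ
      have hcos : ((Real.cos (u * ξ) : ℝ) : ℂ)
          = (Complex.exp (((u * ξ : ℝ) : ℂ) * Complex.I)
            + Complex.exp (-((u * ξ : ℝ) : ℂ) * Complex.I)) / 2 := by
        rw [Complex.ofReal_cos]
        have h2c := Complex.two_cos (((u * ξ : ℝ) : ℂ))
        linear_combination h2c / 2
      have e1 : Complex.exp (Complex.I * ((u - x : ℝ) : ℂ) * ξ)
          = Complex.exp (((u * ξ : ℝ) : ℂ) * Complex.I)
            * Complex.exp (-(Complex.I * x * ξ)) := by
        rw [← Complex.exp_add]; congr 1; push_cast; ring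
      have e2 : Complex.exp (Complex.I * ((-(u + x) : ℝ) : ℂ) * ξ)
          = Complex.exp (-((u * ξ : ℝ) : ℂ) * Complex.I)
            * Complex.exp (-(Complex.I * x * ξ)) := by
        rw [← Complex.exp_add]; congr 1; push_cast; ring
      rw [hcos, e1, e2]; ring
    simp only [hK]
    rw [hptwise, MeasureTheory.integral_const_mul,
      integral_add (hgmul (u - x)) (hgmul (-(u + x))), hJ (u - x), hJ (-(u + x))]
  -- the decay bound
  set B : ℝ := D * 4 ^ M * (2:ℝ) ^ (-(N:ℝ) * l) * (1 + |u|) ^ (-(N:ℝ)) with hB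
  have hBnonneg : 0 ≤ B := by positivity
  have hbase : (0:ℝ) < b * (1 + |u|) / 4 := by positivity
  have hMcast : (M:ℝ) = (N:ℝ) + 1 := by rw [hM]; push_cast; ring
  have hGb : ∀ y : ℝ, |u| - 1 ≤ |y| → b * ‖G (b * y)‖ ≤ B := by
    intro y hy
    have h1 : ‖G (b * y)‖ ≤ D * (1 + |b * y|) ^ (-(M:ℝ)) := hDbd (b * y)
    have h2 : b * (1 + |u|) / 4 ≤ 1 + |b * y| := by
      rw [abs_mul, abs_of_pos hb0]
      have h3 : b * (|u| - 1) ≤ b * |y| := mul_le_mul_of_nonneg_left hy hb0.le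
      nlinarith [hb0, hu]
    have h3 : (1 + |b * y|) ^ (-(M:ℝ)) ≤ (b * (1 + |u|) / 4) ^ (-(M:ℝ)) := by
      rw [Real.rpow_neg (by positivity), Real.rpow_neg hbase.le]
      exact inv_anti₀ (Real.rpow_pos_of_pos hbase _)
        (Real.rpow_le_rpow hbase.le h2 (by positivity))
    have key0 : b * (D * ((b * (1 + |u|) / 4) ^ (-(M:ℝ))))
        = D * 4 ^ M * (2:ℝ) ^ (-(N:ℝ) * l) * (1 + |u|) ^ (-(M:ℝ)) := by
      have i1 : (b * (1 + |u|) / 4 : ℝ) ^ (-(M:ℝ))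
          = b ^ (-(M:ℝ)) * (1 + |u|) ^ (-(M:ℝ)) * ((4:ℝ) ^ (M:ℝ)) := by
        rw [div_eq_mul_inv, Real.mul_rpow (by positivity) (by positivity),
          Real.mul_rpow (by positivity) (by positivity),
          Real.inv_rpow (by norm_num : (0:ℝ) ≤ 4), Real.rpow_neg (by norm_num : (0:ℝ) ≤ 4),
          inv_inv]
      have i2 : b * b ^ (-(M:ℝ)) = (2:ℝ) ^ (-(N:ℝ) * l) := by
        rw [hb, ← Real.rpow_mul (by norm_num : (0:ℝ) ≤ 2),
          ← Real.rpow_add (by norm_num : (0:ℝ) < 2)]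
        congr 1
        rw [hMcast]; ring
      have i4 : ((4:ℝ) ^ (M:ℝ)) = ((4:ℝ) ^ M : ℝ) := Real.rpow_natCast 4 M
      rw [i1, i4]
      calc b * (D * (b ^ (-(M:ℝ)) * (1 + |u|) ^ (-(M:ℝ)) * ((4:ℝ) ^ M : ℝ)))
          = D * 4 ^ M * (b * b ^ (-(M:ℝ))) * (1 + |u|) ^ (-(M:ℝ)) := by ring
        _ = D * 4 ^ M * (2:ℝ) ^ (-(N:ℝ) * l) * (1 + |u|) ^ (-(M:ℝ)) := by rw [i2]
    have i3 : (1 + |u|) ^ (-(M:ℝ)) ≤ (1 + |u|) ^ (-(N:ℝ)) :=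
      Real.rpow_le_rpow_of_exponent_le (by linarith [abs_nonneg u])
        (by rw [hMcast]; linarith)
    calc b * ‖G (b * y)‖
        ≤ b * (D * ((b * (1 + |u|) / 4) ^ (-(M:ℝ)))) := by
          refine mul_le_mul_of_nonneg_left
            (h1.trans (mul_le_mul_of_nonneg_left h3 hD.le)) hb0.le
      _ = D * 4 ^ M * (2:ℝ) ^ (-(N:ℝ) * l) * (1 + |u|) ^ (-(M:ℝ)) := key0
      _ ≤ B := by
          rw [hB]
          exact mul_le_mul_of_nonneg_left i3 (by positivity)
  have hKbd : ∀ x : ℝ, F x ≠ 0 → ‖K x‖ ≤ B := by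
    intro x hx
    have hxle : |x| ≤ 1 := hFsupp x hx
    have hy1 : |u| - 1 ≤ |u - x| := by
      have := abs_sub_abs_le_abs_sub u x
      linarith
    have hy2 : |u| - 1 ≤ |(-(u + x))| := by
      rw [abs_neg]
      have := abs_add_le (u + x) (-x)
      simp only [add_neg_cancel_right] at this
      rw [abs_neg] at this
      linarith
    rw [hKsplit x]
    have hnb : ∀ s : ℝ, ‖(b : ℂ) * G s‖ = b * ‖G s‖ := by
      intro s
      rw [norm_mul, Complex.norm_real, Real.norm_eq_abs, abs_of_pos hb0]
    calc ‖(2:ℂ)⁻¹ * ((b : ℂ) * G (b * (u - x)) + (b : ℂ) * G (b * (-(u + x))))‖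
        = 2⁻¹ * ‖(b : ℂ) * G (b * (u - x)) + (b : ℂ) * G (b * (-(u + x)))‖ := by
          rw [norm_mul]; norm_num
      _ ≤ 2⁻¹ * (b * ‖G (b * (u - x))‖ + b * ‖G (b * (-(u + x)))‖) := by
          refine mul_le_mul_of_nonneg_left ?_ (by norm_num)
          refine (norm_add_le _ _).trans ?_
          rw [hnb, hnb]
      _ ≤ 2⁻¹ * (B + B) := by
          refine mul_le_mul_of_nonneg_left
            (add_le_add (hGb _ hy1) (hGb _ hy2)) (by norm_num)
      _ = B := by ring
  -- final assembly
  have hDPeq : dyadicPiece η F l u = ((2 * Real.pi)⁻¹ : ℝ) • ∫ x : ℝ, F x * K x := by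
    rw [dyadicPiece]
    simp only [← ha]
    rw [hswap]
  have hnorm_int : ‖∫ x : ℝ, F x * K x‖ ≤ (∫ x : ℝ, ‖F x‖) * B := by
    refine (norm_integral_le_integral_norm _).trans ?_
    rw [← MeasureTheory.integral_mul_const]
    refine integral_mono_of_nonneg (Filter.Eventually.of_forall fun x => norm_nonneg _)
      (hInt.norm.mul_const B) (Filter.Eventually.of_forall fun x => ?_)
    beta_reduce
    by_cases hx : F x = 0
    · simp [hx]
    · rw [norm_mul]
      exact mul_le_mul_of_nonneg_left (hKbd x hx) (norm_nonneg _)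
  rw [hDPeq, norm_smul, Real.norm_eq_abs, abs_of_pos (by positivity : (0:ℝ) < (2 * Real.pi)⁻¹)]
  calc (2 * Real.pi)⁻¹ * ‖∫ x : ℝ, F x * K x‖
      ≤ (2 * Real.pi)⁻¹ * ((∫ x : ℝ, ‖F x‖) * B) :=
        mul_le_mul_of_nonneg_left hnorm_int (by positivity)
    _ ≤ (2 * Real.pi)⁻¹ * ((2 * (eLpNorm F 2 volume).toReal) * B) := by
        refine mul_le_mul_of_nonneg_left (mul_le_mul_of_nonneg_right hL1 hBnonneg) (by positivity)
    _ = (2 * Real.pi)⁻¹ * 2 * (D * 4 ^ M) * (2:ℝ) ^ (-(N:ℝ) * l) * (1 + |u|) ^ (-(N:ℝ))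
          * (eLpNorm F 2 volume).toReal := by
        rw [hB]; ring
end
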